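/- G(Σ, e) is the internal direct sum ⟨3Ψ_t⟩ ⊕ ⟨mΨ_t⟩ ⊕ ⨁_{i=1}^{2^ν−2} ⟨Ψ_{t_i} − Ψ_t⟩, where the subgroup ⟨3Ψ_t⟩ is cyclic of order m, the subgroup ⟨mΨ_t⟩ is cyclic of order 3, and each subgroup ⟨Ψ_{t_i} − Ψ_t⟩ for 1 ≤ i ≤ 2^ν − 2 is cyclic of order 3. -/

import Mathlib

/-!
Write `P = Ψ_t` and `m = 3 s₂ + 2^ν`. The relations force `Ψ_s = 3P` on `Σ₂` and `3Ψ_{t_i} = 3P`,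
so three times `∑ Ψ_s = 0` reads `3mP = 0`. As `gcd(3, m) = 1`, `P` is a combination of `3P` and
`mP`, and with `Ψ_{t'} = -∑_{s ≠ t'} Ψ_s` the generators span `G(Σ, e)`. Independence and the
orders come from a dual family: for each generator a homomorphism to `ℤ/m` or `ℤ/3` that is `1` on
it and `0` on the others, obtained by giving the `Ψ_s` values compatible with the relations:
`Ψ_{t_i} ↦ 3⁻¹ ∈ ℤ/m` (and `1` on `Σ₂`); `Ψ_{t_i} ↦ 2^ν - [t_i = t'] ∈ ℤ/3`, where `2^ν` is the
inverse of `m` mod 3; and `Ψ_{t_i} ↦ [t_i = t_k] - [t_i = t'] ∈ ℤ/3`.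
-/

/-- The subgroup of relations: `e s • ψ s - e t • ψ t` for all `s t`, together with
`∑ s, ψ s`. -/
noncomputable def relSub {S : Type*} [Fintype S] (e : S → ℤ) : AddSubgroup (S →₀ ℤ) :=
  AddSubgroup.closure
    ({x | ∃ s t : S, x = Finsupp.single s (e s) - Finsupp.single t (e t)} ∪
      {∑ s : S, Finsupp.single s 1})

/-- `G(Σ, e)`: the quotient of the free abelian group on `Σ` by the relations. -/
abbrev CompGrp {S : Type*} [Fintype S] (e : S → ℤ) : Type _ :=
  (S →₀ ℤ) ⧸ relSub e

/-- `Ψ s`: the image of the basis element `ψ s` in `G(Σ, e)`. -/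
noncomputable def Psi {S : Type*} [Fintype S] (e : S → ℤ) (s : S) : CompGrp e :=
  QuotientAddGroup.mk (Finsupp.single s 1)

/-- `Σ = Σ₂ ⊔ Σ₆` with `#Σ₂ = s₂` and `#Σ₆ = 2^ν`. -/
abbrev Sig2 (s₂ ν : ℕ) : Type := Fin s₂ ⊕ Fin (2 ^ ν)

/-- `e ≡ 1` on `Σ₂` and `e ≡ 3` on `Σ₆`. -/
def e2 (s₂ ν : ℕ) : Sig2 s₂ ν → ℤ := Sum.elim (fun _ => 1) (fun _ => 3)

/-- `t i` (`1`-based): the `i`-th point of `Σ₆ = {t_1, …, t_{2^ν}}`. -/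
def tPt (s₂ ν : ℕ) (i : ℕ) : Sig2 s₂ ν :=
  Sum.inr ⟨(i - 1) % 2 ^ ν, Nat.mod_lt _ (by positivity)⟩

/-- The generators `v_j` (`1`-based, `v_0 := Ψ 𝔰`):
`v_{2k-1} = Ψ t_{2k-1} - Ψ t_{2k}` and `v_{2k} = Ψ t_{2k-1} + Ψ t_{2k} - Ψ t - Ψ t'`,
where `t = t_{2^ν - 1}` and `t' = t_{2^ν}`. -/
noncomputable def vGen (s₂ ν : ℕ) (𝔰 : Fin s₂) : ℕ → CompGrp (e2 s₂ ν) := fun j =>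
  if j = 0 then Psi (e2 s₂ ν) (Sum.inl 𝔰)
  else if j % 2 = 1 then
    Psi (e2 s₂ ν) (tPt s₂ ν j) - Psi (e2 s₂ ν) (tPt s₂ ν (j + 1))
  else
    Psi (e2 s₂ ν) (tPt s₂ ν (j - 1)) + Psi (e2 s₂ ν) (tPt s₂ ν j)
      - Psi (e2 s₂ ν) (tPt s₂ ν (2 ^ ν - 1)) - Psi (e2 s₂ ν) (tPt s₂ ν (2 ^ ν))

/-- Generators for the decomposition of STATEMENT 6: `c_0 = 3Ψt`, `c_1 = mΨt`, and
`c_j = Ψ t_{j-1} - Ψ t` for `2 ≤ j ≤ 2^ν - 1` (so the `⟨c_j⟩` for `2 ≤ j` run over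
`⟨Ψ t_i - Ψ t⟩` for `1 ≤ i ≤ 2^ν - 2`), where `t = t_{2^ν - 1}`. -/
noncomputable def cGen (s₂ ν : ℕ) : ℕ → CompGrp (e2 s₂ ν) := fun j =>
  if j = 0 then (3 : ℕ) • Psi (e2 s₂ ν) (tPt s₂ ν (2 ^ ν - 1))
  else if j = 1 then (3 * s₂ + 2 ^ ν) • Psi (e2 s₂ ν) (tPt s₂ ν (2 ^ ν - 1))
  else Psi (e2 s₂ ν) (tPt s₂ ν (j - 1)) - Psi (e2 s₂ ν) (tPt s₂ ν (2 ^ ν - 1))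

theorem addOrderOf_eq_of_map_eq_one {G : Type*} [AddCommGroup G] {n : ℕ} {c : G}
    (hn : n • c = 0) (φ : G →+ ZMod n) (hφ : φ c = 1) : addOrderOf c = n := by
  refine Nat.dvd_antisymm (addOrderOf_dvd_of_nsmul_eq_zero hn) ?_
  simpa only [hφ, ZMod.addOrderOf_one] using addOrderOf_map_dvd φ c

theorem disjoint_zmultiples_ker {G : Type*} [AddCommGroup G] {n : ℕ} {c : G}
    (hn : n • c = 0) (φ : G →+ ZMod n) (hφ : φ c = 1) :
    Disjoint (AddSubgroup.zmultiples c) φ.ker := by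
  rw [AddSubgroup.disjoint_def]
  rintro _ ⟨k, rfl⟩ hk
  rw [AddMonoidHom.mem_ker, map_zsmul, hφ, zsmul_one, ZMod.intCast_zmod_eq_zero_iff_dvd] at hk
  obtain ⟨q, rfl⟩ := hk
  simp [mul_comm, mul_zsmul, hn]

theorem DirectSum.isInternal_addSubgroup_of_iSupIndep_of_iSup_eq_top {ι G : Type*}
    [DecidableEq ι] [AddCommGroup G] {A : ι → AddSubgroup G} (hi : iSupIndep A)
    (hs : iSup A = ⊤) : DirectSum.IsInternal A := by
  refine DirectSum.isInternal_submodule_of_iSupIndep_of_iSup_eq_top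
    (A := fun i => (A i).toIntSubmodule) ((iSupIndep_map_orderIso_iff _).2 hi) ?_
  rw [← AddSubgroup.toIntSubmodule.map_iSup, hs, map_top]

theorem DirectSum.isInternal_zmultiples_of_dual {ι G : Type*} [DecidableEq ι] [AddCommGroup G]
    {c : ι → G} {n : ι → ℕ} (hn : ∀ i, n i • c i = 0)
    (hdual : ∀ i, ∃ φ : G →+ ZMod (n i), φ (c i) = 1 ∧ ∀ j ≠ i, φ (c j) = 0)
    (hspan : AddSubgroup.closure (Set.range c) = ⊤) :
    DirectSum.IsInternal (fun i => AddSubgroup.zmultiples (c i)) ∧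
      ∀ i, addOrderOf (c i) = n i := by
  choose φ hφ hφ' using hdual
  refine ⟨DirectSum.isInternal_addSubgroup_of_iSupIndep_of_iSup_eq_top ?_ ?_,
    fun i => addOrderOf_eq_of_map_eq_one (hn i) (φ i) (hφ i)⟩
  · refine iSupIndep_def.2 fun i => (disjoint_zmultiples_ker (hn i) (φ i) (hφ i)).mono_right ?_
    exact iSup₂_le fun j hj => AddSubgroup.zmultiples_le.2 (hφ' i j hj)
  · simp_rw [← hspan, AddSubgroup.zmultiples_eq_closure, ← AddSubgroup.closure_iUnion,
      Set.iUnion_singleton_eq_range]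

namespace CompGrp

variable {S : Type*} [Fintype S] (e : S → ℤ)

theorem mk_single (s : S) (k : ℤ) :
    (QuotientAddGroup.mk (Finsupp.single s k) : CompGrp e) = k • Psi e s := by
  rw [Psi, ← QuotientAddGroup.mk_zsmul, Finsupp.smul_single, smul_eq_mul, mul_one]

theorem zsmul_Psi_eq (s t : S) : e s • Psi e s = e t • Psi e t := by
  rw [← mk_single, ← mk_single, ← sub_eq_zero, ← QuotientAddGroup.mk_sub,
    QuotientAddGroup.eq_zero_iff]
  exact AddSubgroup.subset_closure (Or.inl ⟨s, t, rfl⟩)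

theorem sum_Psi : ∑ s, Psi e s = 0 := by
  simp only [Psi, ← QuotientAddGroup.mk_sum, QuotientAddGroup.eq_zero_iff]
  exact AddSubgroup.subset_closure (Or.inr rfl)

theorem eq_top_of_Psi_mem {H : AddSubgroup (CompGrp e)} (s₀ : S)
    (hH : ∀ s ≠ s₀, Psi e s ∈ H) : H = ⊤ := by
  classical
  have hPsi : ∀ s, Psi e s ∈ H := by
    intro s
    by_cases hs : s = s₀
    · have := sum_Psi e
      rw [← Finset.add_sum_erase _ _ (Finset.mem_univ s), add_eq_zero_iff_eq_neg] at this
      rw [this]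
      exact H.neg_mem (H.sum_mem fun t ht => hH t (hs ▸ Finset.ne_of_mem_erase ht))
    · exact hH s hs
  refine eq_top_iff.2 fun x _ => QuotientAddGroup.induction_on x fun f => ?_
  induction f using Finsupp.induction_linear with
  | zero => exact H.zero_mem
  | add f g hf hg => exact H.add_mem hf hg
  | single s k => exact mk_single e s k ▸ H.zsmul_mem (hPsi s) k

variable {M : Type*} [AddCommGroup M] (f : S → M)

noncomputable def lift (hrel : ∀ s t, e s • f s = e t • f t) (hsum : ∑ s, f s = 0) :
    CompGrp e →+ M :=
  QuotientAddGroup.lift _ (Finsupp.liftAddHom fun s => zmultiplesHom M (f s)) <| by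
    rw [relSub, AddSubgroup.closure_le]
    rintro _ (⟨s, t, rfl⟩ | rfl)
    · simp only [SetLike.mem_coe, AddMonoidHom.mem_ker, map_sub, Finsupp.liftAddHom_apply_single,
        zmultiplesHom_apply, hrel s t, sub_self]
    · simp only [SetLike.mem_coe, AddMonoidHom.mem_ker, map_sum, Finsupp.liftAddHom_apply_single,
        zmultiplesHom_apply, one_zsmul, hsum]

theorem lift_Psi (hrel : ∀ s t, e s • f s = e t • f t) (hsum : ∑ s, f s = 0) (s : S) :
    lift e f hrel hsum (Psi e s) = f s := by
  simp [lift, Psi]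

end CompGrp

theorem ZMod.three_zsmul_eq_zero (x : ZMod 3) : (3 : ℤ) • x = 0 := by
  revert x
  decide

theorem ZMod.two_pow_mul_two_pow (ν : ℕ) : (2 : ZMod 3) ^ ν * 2 ^ ν = 1 := by
  rw [← mul_pow, show (2 : ZMod 3) * 2 = 1 by decide, one_pow]

theorem coprime_three_three_mul_add_two_pow (s₂ ν : ℕ) : Nat.Coprime 3 (3 * s₂ + 2 ^ ν) := by
  rw [Nat.coprime_mul_left_add_right]
  exact Nat.Coprime.pow_right ν (by decide)

section

variable (s₂ ν : ℕ)

local notation "Ψ" => Psi (e2 s₂ ν)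

-- `t = t_{2^ν - 1}` and `t' = t_{2^ν}`, as 0-based indices into `Σ₆`.
def tIdx : Fin (2 ^ ν) := ⟨2 ^ ν - 2, Nat.sub_lt (Nat.two_pow_pos ν) two_pos⟩

def tIdx' : Fin (2 ^ ν) := ⟨2 ^ ν - 1, Nat.sub_lt (Nat.two_pow_pos ν) one_pos⟩

theorem tPt_eq_inr {i : ℕ} (h1 : 1 ≤ i) (h2 : i ≤ 2 ^ ν) :
    tPt s₂ ν i = .inr ⟨i - 1, by omega⟩ := by
  simp only [tPt, Sum.inr.injEq, Fin.mk.injEq]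
  exact Nat.mod_eq_of_lt (by omega)

theorem tPt_two_pow_sub_one : tPt s₂ ν (2 ^ ν - 1) = .inr (tIdx ν) := by
  have := Nat.two_pow_pos ν
  simp only [tPt, tIdx, Sum.inr.injEq, Fin.mk.injEq]
  rw [Nat.mod_eq_of_lt (by omega)]
  omega

theorem Psi_inl_eq (a : Fin s₂) (j : Fin (2 ^ ν)) : Ψ (.inl a) = (3 : ℤ) • Ψ (.inr j) := by
  have h := CompGrp.zsmul_Psi_eq (e2 s₂ ν) (.inl a) (.inr j)
  rwa [show e2 s₂ ν (.inl a) = 1 from rfl, one_zsmul] at h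

theorem three_zsmul_Psi_inr (i j : Fin (2 ^ ν)) : (3 : ℤ) • Ψ (.inr i) = (3 : ℤ) • Ψ (.inr j) :=
  CompGrp.zsmul_Psi_eq (e2 s₂ ν) (.inr i) (.inr j)

theorem three_mul_smul_Psi_inr (j : Fin (2 ^ ν)) : (3 * (3 * s₂ + 2 ^ ν)) • Ψ (.inr j) = 0 := by
  have h := congrArg (zsmulAddGroupHom 3) (CompGrp.sum_Psi (e2 s₂ ν))
  rw [Fintype.sum_sum_type, map_add, map_sum, map_sum, map_zero] at h
  simp only [zsmulAddGroupHom_apply, Psi_inl_eq s₂ ν _ j, three_zsmul_Psi_inr s₂ ν _ j,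
    Finset.sum_const, Finset.card_univ, Fintype.card_fin] at h
  rw [← h]
  module

theorem cGen_zero : cGen s₂ ν 0 = 3 • Ψ (.inr (tIdx ν)) := by
  rw [cGen, if_pos rfl, tPt_two_pow_sub_one]

theorem cGen_one : cGen s₂ ν 1 = (3 * s₂ + 2 ^ ν) • Ψ (.inr (tIdx ν)) := by
  rw [cGen, if_neg one_ne_zero, if_pos rfl, tPt_two_pow_sub_one]

theorem cGen_add_two {l : ℕ} (hl : l < 2 ^ ν) :
    cGen s₂ ν (l + 2) = Ψ (.inr ⟨l, hl⟩) - Ψ (.inr (tIdx ν)) := by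
  rw [cGen, if_neg (by omega), if_neg (by omega), tPt_two_pow_sub_one, tPt_eq_inr s₂ ν (by omega)
    (by omega)]
  rfl

theorem cGen_succ {i : ℕ} (hi : 1 ≤ i) :
    cGen s₂ ν (i + 1) = Ψ (tPt s₂ ν i) - Ψ (tPt s₂ ν (2 ^ ν - 1)) := by
  rw [cGen, if_neg (by omega), if_neg (by omega), Nat.add_sub_cancel]

def cGenOrder (j : ℕ) : ℕ := if j = 0 then 3 * s₂ + 2 ^ ν else 3

theorem cGenOrder_smul_cGen : ∀ j, cGenOrder s₂ ν j • cGen s₂ ν j = 0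
  | 0 => by
    rw [cGenOrder, if_pos rfl, cGen_zero, smul_smul, mul_comm]
    exact three_mul_smul_Psi_inr s₂ ν _
  | 1 => by
    rw [cGenOrder, if_neg one_ne_zero, cGen_one, smul_smul]
    exact three_mul_smul_Psi_inr s₂ ν _
  | l + 2 => by
    rw [cGenOrder, if_neg (by omega), cGen, if_neg (by omega), if_neg (by omega), tPt, tPt,
      nsmul_sub, sub_eq_zero, ← natCast_zsmul, ← natCast_zsmul]
    exact three_zsmul_Psi_inr s₂ ν _ _

noncomputable def liftE2 {M : Type*} [AddCommGroup M] (a : M) (g : Fin (2 ^ ν) → M)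
    (hg : ∀ l, (3 : ℤ) • g l = a) (hsum : s₂ • a + ∑ l, g l = 0) : CompGrp (e2 s₂ ν) →+ M :=
  CompGrp.lift (e2 s₂ ν) (Sum.elim (fun _ => a) g)
    (by rintro (_ | i) (_ | j) <;> simp [e2, hg])
    (by simpa [Fintype.sum_sum_type] using hsum)

theorem liftE2_Psi_inr {M : Type*} [AddCommGroup M] (a : M) (g : Fin (2 ^ ν) → M)
    (hg : ∀ l, (3 : ℤ) • g l = a) (hsum : s₂ • a + ∑ l, g l = 0) (l : Fin (2 ^ ν)) :
    liftE2 s₂ ν a g hg hsum (Ψ (.inr l)) = g l :=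
  CompGrp.lift_Psi _ _ _ _ _

theorem exists_dual_cGen_zero :
    ∃ φ : CompGrp (e2 s₂ ν) →+ ZMod (3 * s₂ + 2 ^ ν),
      φ (cGen s₂ ν 0) = 1 ∧ ∀ j < 2 ^ ν, j ≠ 0 → φ (cGen s₂ ν j) = 0 := by
  set α : ZMod (3 * s₂ + 2 ^ ν) := 3⁻¹
  have h3α : 3 * α = 1 := by
    exact_mod_cast ZMod.coe_mul_inv_eq_one 3 (coprime_three_three_mul_add_two_pow s₂ ν)
  have hm : (3 * s₂ + 2 ^ ν : ZMod (3 * s₂ + 2 ^ ν)) = 0 := by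
    exact_mod_cast ZMod.natCast_self (3 * s₂ + 2 ^ ν)
  refine ⟨liftE2 s₂ ν 1 (fun _ => α) (fun _ => by rw [zsmul_eq_mul]; exact_mod_cast h3α) ?_, ?_, ?_⟩
  · simp only [Finset.sum_const, Finset.card_univ, Fintype.card_fin, nsmul_eq_mul, mul_one]
    push_cast
    linear_combination (-(s₂ : ZMod (3 * s₂ + 2 ^ ν))) * h3α + α * hm
  · rw [cGen_zero, map_nsmul, liftE2_Psi_inr, nsmul_eq_mul]
    exact_mod_cast h3α
  · rintro (_ | _ | l) hl hj
    · exact absurd rfl hj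
    · rw [cGen_one, map_nsmul, liftE2_Psi_inr, nsmul_eq_mul, ZMod.natCast_self, zero_mul]
    · rw [show l + 1 + 1 = l + 2 from rfl, cGen_add_two s₂ ν (by omega : l < 2 ^ ν), map_sub,
        liftE2_Psi_inr, liftE2_Psi_inr, sub_self]

theorem exists_dual_cGen_one (hν : 1 ≤ ν) :
    ∃ φ : CompGrp (e2 s₂ ν) →+ ZMod 3,
      φ (cGen s₂ ν 1) = 1 ∧ ∀ j < 2 ^ ν, j ≠ 1 → φ (cGen s₂ ν j) = 0 := by
  have h2 : 2 ≤ 2 ^ ν := Nat.le_self_pow (by omega) 2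
  have hm : ((3 * s₂ + 2 ^ ν : ℕ) : ZMod 3) * 2 ^ ν = 1 := by
    rw [Nat.cast_add, Nat.cast_mul, show ((3 : ℕ) : ZMod 3) = 0 from rfl, zero_mul, zero_add,
      Nat.cast_pow, Nat.cast_ofNat, ZMod.two_pow_mul_two_pow]
  have htt' : tIdx ν ≠ tIdx' ν := by
    simp only [ne_eq, Fin.ext_iff, tIdx, tIdx']
    omega
  refine ⟨liftE2 s₂ ν 0 (fun l => 2 ^ ν - if l = tIdx' ν then 1 else 0)
    (fun _ => ZMod.three_zsmul_eq_zero _) ?_, ?_, ?_⟩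
  · simp [Finset.sum_sub_distrib, ZMod.two_pow_mul_two_pow]
  · rw [cGen_one, map_nsmul, liftE2_Psi_inr, if_neg htt', sub_zero, nsmul_eq_mul, hm]
  · rintro (_ | _ | l) hl hj
    · rw [cGen_zero, map_nsmul, liftE2_Psi_inr, nsmul_eq_mul, ZMod.natCast_self, zero_mul]
    · exact absurd rfl hj
    · rw [show l + 1 + 1 = l + 2 from rfl, cGen_add_two s₂ ν (by omega : l < 2 ^ ν), map_sub,
        liftE2_Psi_inr, liftE2_Psi_inr, if_neg htt', if_neg, sub_self]
      simp only [Fin.ext_iff, tIdx']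
      omega

theorem exists_dual_cGen_add_two {k : ℕ} (hk : k + 2 < 2 ^ ν) :
    ∃ φ : CompGrp (e2 s₂ ν) →+ ZMod 3,
      φ (cGen s₂ ν (k + 2)) = 1 ∧ ∀ j < 2 ^ ν, j ≠ k + 2 → φ (cGen s₂ ν j) = 0 := by
  set g : Fin (2 ^ ν) → ZMod 3 := Pi.single ⟨k, by omega⟩ 1 - Pi.single (tIdx' ν) 1
  have hg : ∀ l (hl : l + 2 < 2 ^ ν), g ⟨l, by omega⟩ = if l = k then 1 else 0 := by
    intro l hl
    simp only [g, Pi.sub_apply, Pi.single_apply, Fin.ext_iff, tIdx']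
    rw [if_neg (show l ≠ 2 ^ ν - 1 by omega), sub_zero]
  have hgt : g (tIdx ν) = 0 := by
    simp only [g, Pi.sub_apply, Pi.single_apply, tIdx, tIdx', Fin.ext_iff]
    rw [if_neg (by omega), if_neg (by omega), sub_zero]
  refine ⟨liftE2 s₂ ν 0 g (fun _ => ZMod.three_zsmul_eq_zero _) (by simp [g]), ?_, ?_⟩
  · rw [cGen_add_two s₂ ν (by omega : k < 2 ^ ν), map_sub, liftE2_Psi_inr, liftE2_Psi_inr, hgt,
      sub_zero, hg _ hk, if_pos rfl]
  · rintro (_ | _ | l) hl hj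
    · rw [cGen_zero, map_nsmul, liftE2_Psi_inr, hgt, smul_zero]
    · rw [cGen_one, map_nsmul, liftE2_Psi_inr, hgt, smul_zero]
    · rw [show l + 1 + 1 = l + 2 from rfl, cGen_add_two s₂ ν (by omega : l < 2 ^ ν), map_sub,
        liftE2_Psi_inr, liftE2_Psi_inr, hgt, sub_zero, hg _ hl, if_neg (by omega)]

theorem exists_dual_cGen (hν : 1 ≤ ν) (i : Fin (2 ^ ν)) :
    ∃ φ : CompGrp (e2 s₂ ν) →+ ZMod (cGenOrder s₂ ν i),
      φ (cGen s₂ ν i) = 1 ∧ ∀ j ≠ i, φ (cGen s₂ ν j) = 0 := by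
  suffices ∃ φ : CompGrp (e2 s₂ ν) →+ ZMod (cGenOrder s₂ ν i),
      φ (cGen s₂ ν i) = 1 ∧ ∀ j < 2 ^ ν, j ≠ (i : ℕ) → φ (cGen s₂ ν j) = 0 from
    this.imp fun φ ⟨h1, h0⟩ => ⟨h1, fun j hj => h0 j j.isLt (Fin.val_injective.ne hj)⟩
  obtain ⟨_ | _ | k, hi⟩ := i
  · exact exists_dual_cGen_zero s₂ ν
  · exact exists_dual_cGen_one s₂ ν hν
  · exact exists_dual_cGen_add_two s₂ ν hi

theorem closure_range_cGen (hν : 1 ≤ ν) :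
    AddSubgroup.closure (Set.range fun i : Fin (2 ^ ν) => cGen s₂ ν i) = ⊤ := by
  set H := AddSubgroup.closure (Set.range fun i : Fin (2 ^ ν) => cGen s₂ ν i)
  have hc : ∀ j < 2 ^ ν, cGen s₂ ν j ∈ H := fun j hj => AddSubgroup.subset_closure ⟨⟨j, hj⟩, rfl⟩
  have h2 : 2 ≤ 2 ^ ν := Nat.le_self_pow (by omega) 2
  have hP : Ψ (.inr (tIdx ν)) ∈ H := by
    obtain ⟨a, b, hab⟩ := Nat.isCoprime_iff_coprime.2 (coprime_three_three_mul_add_two_pow s₂ ν)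
    have hab' : Ψ (.inr (tIdx ν)) = a • cGen s₂ ν 0 + b • cGen s₂ ν 1 := by
      rw [cGen_zero, cGen_one]
      match_scalars
      push_cast at hab ⊢
      linear_combination -hab
    rw [hab']
    exact H.add_mem (H.zsmul_mem (hc 0 (by omega)) a) (H.zsmul_mem (hc 1 (by omega)) b)
  refine CompGrp.eq_top_of_Psi_mem _ (.inr (tIdx' ν)) ?_
  rintro (a | l) hl
  · rw [Psi_inl_eq s₂ ν a (tIdx ν)]
    exact H.zsmul_mem hP 3
  · by_cases hlt : l = tIdx ν
    · rw [hlt]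
      exact hP
    · have hl2 : l.val + 2 < 2 ^ ν := by
        simp only [ne_eq, Sum.inr.injEq, Fin.ext_iff, tIdx, tIdx'] at hl hlt
        omega
      rw [← sub_add_cancel (Ψ (.inr l)) (Ψ (.inr (tIdx ν))), ← cGen_add_two s₂ ν l.isLt]
      exact H.add_mem (hc _ hl2) hP

end

theorem stmt6_general (s₂ ν : ℕ) (hν : 1 ≤ ν) :
    DirectSum.IsInternal
      (fun i : Fin (2 ^ ν) => AddSubgroup.zmultiples (cGen s₂ ν i.val)) ∧
    addOrderOf (cGen s₂ ν 0) = 3 * s₂ + 2 ^ ν ∧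
    addOrderOf (cGen s₂ ν 1) = 3 ∧
    (∀ i : ℕ, 1 ≤ i → i ≤ 2 ^ ν - 2 →
      addOrderOf (Psi (e2 s₂ ν) (tPt s₂ ν i) - Psi (e2 s₂ ν) (tPt s₂ ν (2 ^ ν - 1))) = 3) := by
  have h2 : 2 ≤ 2 ^ ν := Nat.le_self_pow (by omega) 2
  obtain ⟨hinternal, horder⟩ := DirectSum.isInternal_zmultiples_of_dual
    (fun i : Fin (2 ^ ν) => cGenOrder_smul_cGen s₂ ν i) (exists_dual_cGen s₂ ν hν)
    (closure_range_cGen s₂ ν hν)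
  refine ⟨hinternal, horder ⟨0, by omega⟩, horder ⟨1, by omega⟩, fun i hi hi' => ?_⟩
  rw [← cGen_succ s₂ ν hi]
  exact horder ⟨i + 1, by omega⟩

/-- `G(Σ, e)` is the internal direct sum
`⟨3Ψt⟩ ⊕ ⟨mΨt⟩ ⊕ ⨁_{i=1}^{2^ν-2} ⟨Ψ t_i - Ψ t⟩`, where `⟨3Ψt⟩` is cyclic of order
`m = 3s₂ + 2^ν`, `⟨mΨt⟩` is cyclic of order `3`, and each `⟨Ψ t_i - Ψ t⟩` is cyclic of
order `3`. -/
theorem stmt6 (s₂ ν : ℕ) (hs : 1 ≤ s₂) (hν : 1 ≤ ν) :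
    DirectSum.IsInternal
      (fun i : Fin (2 ^ ν) => AddSubgroup.zmultiples (cGen s₂ ν i.val)) ∧
    addOrderOf (cGen s₂ ν 0) = 3 * s₂ + 2 ^ ν ∧
    addOrderOf (cGen s₂ ν 1) = 3 ∧
    (∀ i : ℕ, 1 ≤ i → i ≤ 2 ^ ν - 2 →
      addOrderOf (Psi (e2 s₂ ν) (tPt s₂ ν i) - Psi (e2 s₂ ν) (tPt s₂ ν (2 ^ ν - 1))) = 3) :=
  stmt6_general s₂ ν hν
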